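/- arXiv:2602.09212 — 5 statements merged into one kernel-verified Lean document; each statement's English description precedes it below -/
import Mathlib

section
/- Let (vₙ)ₙ≥1 be a sequence of functions from [0,a] to a Banach space X. If vₙ converges pointwise on [0,a] to a function v₀ as n → ∞, and the family {vₙ : n ≥ 1} is equiregulated, then vₙ converges uniformly on [0,a] to v₀. -/
open Filter

/-- A function `f : ℝ → X` is regulated on `[0,a]` if it has one-sided limits:
a left limit at every `t ∈ (0,a]` and a right limit at every `t ∈ [0,a)`
(limits in the norm topology). -/
def Regulated {X : Type*} [NormedAddCommGroup X] (a : ℝ) (f : ℝ → X) : Prop :=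
  (∀ t ∈ Set.Ioc (0 : ℝ) a, ∃ L : X, Tendsto f (nhdsWithin t (Set.Iio t)) (nhds L)) ∧
  (∀ t ∈ Set.Ico (0 : ℝ) a, ∃ L : X, Tendsto f (nhdsWithin t (Set.Ioi t)) (nhds L))

/-- A set `G` of functions from `[0,a]` to `X` is equiregulated if for every
`α > 0` and `t₀ ∈ [0,a]` there is `μ > 0` such that for all `v ∈ G`:
if `t' ∈ [0,a]` and `t₀ - μ < t' < t₀` then `‖v(t₀⁻) - v(t')‖ < α`, and
if `t' ∈ [0,a]` and `t₀ < t' < t₀ + μ` then `‖v(t') - v(t₀⁺)‖ < α`,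
where `v(t₀⁻)`, `v(t₀⁺)` denote the one-sided limits of `v` at `t₀`. -/
def Equiregulated {X : Type*} [NormedAddCommGroup X] (a : ℝ) (G : Set (ℝ → X)) : Prop :=
  ∀ α > (0 : ℝ), ∀ t₀ ∈ Set.Icc (0 : ℝ) a, ∃ μ > (0 : ℝ), ∀ v ∈ G,
    (∀ L : X, Tendsto v (nhdsWithin t₀ (Set.Iio t₀)) (nhds L) →
      ∀ t' ∈ Set.Icc (0 : ℝ) a, t₀ - μ < t' → t' < t₀ → ‖L - v t'‖ < α) ∧
    (∀ L : X, Tendsto v (nhdsWithin t₀ (Set.Ioi t₀)) (nhds L) →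
      ∀ t' ∈ Set.Icc (0 : ℝ) a, t₀ < t' → t' < t₀ + μ → ‖v t' - L‖ < α)

private lemma norm_add5_le {X : Type*} [NormedAddCommGroup X] (A B C D E : X) :
    ‖A + B + C + D + E‖ ≤ ‖A‖ + ‖B‖ + ‖C‖ + ‖D‖ + ‖E‖ :=
  calc ‖A + B + C + D + E‖ ≤ ‖A + B + C + D‖ + ‖E‖ := norm_add_le _ _
    _ ≤ (‖A + B + C‖ + ‖D‖) + ‖E‖ := by gcongr; exact norm_add_le _ _
    _ ≤ ((‖A + B‖ + ‖C‖) + ‖D‖) + ‖E‖ := by gcongr; exact norm_add_le _ _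
    _ ≤ (((‖A‖ + ‖B‖) + ‖C‖) + ‖D‖) + ‖E‖ := by gcongr; exact norm_add_le _ _

/-- If a sequence `vₙ` of functions `[0,a] → X` (each having one-sided limits)
converges pointwise on `[0,a]` to `v₀` and the family `{vₙ}` is equiregulated,
then `vₙ → v₀` uniformly on `[0,a]`. -/
theorem equiregulated_pointwise_implies_uniform {X : Type*} [NormedAddCommGroup X]
    [NormedSpace ℝ X] [CompleteSpace X] (a : ℝ) (ha : 0 < a)
    (v : ℕ → ℝ → X) (v₀ : ℝ → X)
    (hreg : ∀ n, Regulated a (v n))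
    (hpt : ∀ t ∈ Set.Icc (0 : ℝ) a,
      Tendsto (fun n => v n t) atTop (nhds (v₀ t)))
    (hequi : Equiregulated a (Set.range v)) :
    TendstoUniformlyOn v v₀ atTop (Set.Icc (0 : ℝ) a) := by
  have key : UniformCauchySeqOn v atTop (Set.Icc 0 a) := by
    rw [Metric.uniformCauchySeqOn_iff]
    intro ε hε
    have hε5 : (0:ℝ) < ε/5 := by positivity
    have hequi' : ∀ t ∈ Set.Icc (0:ℝ) a, ∃ μ > (0:ℝ), ∀ w ∈ Set.range v,
        (∀ L : X, Tendsto w (nhdsWithin t (Set.Iio t)) (nhds L) →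
          ∀ t' ∈ Set.Icc (0:ℝ) a, t - μ < t' → t' < t → ‖L - w t'‖ < ε/5) ∧
        (∀ L : X, Tendsto w (nhdsWithin t (Set.Ioi t)) (nhds L) →
          ∀ t' ∈ Set.Icc (0:ℝ) a, t < t' → t' < t + μ → ‖w t' - L‖ < ε/5) :=
      fun t ht => hequi (ε/5) hε5 t ht
    choose! μ hμpos hμ using hequi'
    obtain ⟨T, hT, hcover⟩ := isCompact_Icc.elim_nhds_subcover
      (fun t => Set.Ioo (t - μ t) (t + μ t))
      (fun t ht => Ioo_mem_nhds (by linarith [hμpos t ht]) (by linarith [hμpos t ht]))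
    set lpt : ℝ → ℝ := fun t => max (t - μ t / 2) (t / 2) with hlpt
    set rpt : ℝ → ℝ := fun t => min (t + μ t / 2) ((t + a) / 2) with hrpt
    set P : Finset ℝ := T ∪ T.image lpt ∪ T.image rpt with hP
    have hPIcc : ∀ p ∈ P, p ∈ Set.Icc (0:ℝ) a := by
      intro p hp
      simp only [hP, Finset.mem_union, Finset.mem_image] at hp
      rcases hp with (hp | ⟨t, ht, rfl⟩) | ⟨t, ht, rfl⟩
      · exact hT p hp
      · obtain ⟨h0, h1⟩ := hT t ht
        constructor
        · exact le_trans (by linarith) (le_max_right _ _)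
        · exact max_le (by linarith [hμpos t (hT t ht)]) (by linarith)
      · obtain ⟨h0, h1⟩ := hT t ht
        constructor
        · exact le_min (by linarith [hμpos t (hT t ht)]) (by linarith)
        · exact le_trans (min_le_right _ _) (by linarith)
    have hCauchy : ∀ p ∈ Set.Icc (0:ℝ) a, ∃ N : ℕ, ∀ m ≥ N, ∀ n ≥ N,
        dist (v m p) (v n p) < ε / 5 := by
      intro p hp
      exact Metric.cauchySeq_iff.mp (hpt p hp).cauchySeq (ε/5) hε5
    choose! N hN using hCauchy
    refine ⟨P.sup N, fun m hm n hn x hx => ?_⟩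
    obtain ⟨t, htT, hxt⟩ := Set.mem_iUnion₂.mp (hcover hx)
    have htIcc := hT t htT
    have hμt := hμpos t htIcc
    obtain ⟨hx1, hx2⟩ := hxt
    have hdistP : ∀ p ∈ P, dist (v m p) (v n p) < ε/5 := fun p hp =>
      hN p (hPIcc p hp) m (le_trans (Finset.le_sup hp) hm) n (le_trans (Finset.le_sup hp) hn)
    rcases lt_trichotomy x t with hlt | heq | hgt
    · -- x < t : use left limits at t
      have ht0 : 0 < t := lt_of_le_of_lt hx.1 hlt
      obtain ⟨Lm, hLm⟩ := (hreg m).1 t ⟨ht0, htIcc.2⟩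
      obtain ⟨Ln, hLn⟩ := (hreg n).1 t ⟨ht0, htIcc.2⟩
      have hlP : lpt t ∈ P := by
        simp only [hP, Finset.mem_union, Finset.mem_image]
        exact Or.inl (Or.inr ⟨t, htT, rfl⟩)
      have hlmem : lpt t ∈ Set.Icc (0:ℝ) a := hPIcc _ hlP
      have hl1 : t - μ t < lpt t := lt_of_lt_of_le (by linarith) (le_max_left _ _)
      have hl2 : lpt t < t := max_lt (by linarith) (by linarith)
      have hm1 := (hμ t htIcc (v m) ⟨m, rfl⟩).1 Lm hLm x hx hx1 hlt
      have hm2 := (hμ t htIcc (v m) ⟨m, rfl⟩).1 Lm hLm (lpt t) hlmem hl1 hl2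
      have hn1 := (hμ t htIcc (v n) ⟨n, rfl⟩).1 Ln hLn x hx hx1 hlt
      have hn2 := (hμ t htIcc (v n) ⟨n, rfl⟩).1 Ln hLn (lpt t) hlmem hl1 hl2
      have hd : ‖v m (lpt t) - v n (lpt t)‖ < ε/5 := by
        rw [← dist_eq_norm]; exact hdistP (lpt t) hlP
      have hdecomp : v m x - v n x =
          -(Lm - v m x) + (Lm - v m (lpt t)) + (v m (lpt t) - v n (lpt t))
          + -(Ln - v n (lpt t)) + (Ln - v n x) := by abel
      rw [dist_eq_norm, hdecomp]
      have h5 := norm_add5_le (-(Lm - v m x)) (Lm - v m (lpt t))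
        (v m (lpt t) - v n (lpt t)) (-(Ln - v n (lpt t))) (Ln - v n x)
      rw [norm_neg, norm_neg] at h5
      linarith
    · -- x = t
      have htP : t ∈ P := by
        simp only [hP, Finset.mem_union]
        exact Or.inl (Or.inl htT)
      have := hdistP t htP
      rw [heq]
      linarith
    · -- x > t : use right limits at t
      have hta : t < a := lt_of_lt_of_le hgt hx.2
      obtain ⟨Lm, hLm⟩ := (hreg m).2 t ⟨htIcc.1, hta⟩
      obtain ⟨Ln, hLn⟩ := (hreg n).2 t ⟨htIcc.1, hta⟩
      have hrP : rpt t ∈ P := by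
        simp only [hP, Finset.mem_union, Finset.mem_image]
        exact Or.inr ⟨t, htT, rfl⟩
      have hrmem : rpt t ∈ Set.Icc (0:ℝ) a := hPIcc _ hrP
      have hr1 : t < rpt t := lt_min (by linarith) (by linarith)
      have hr2 : rpt t < t + μ t := lt_of_le_of_lt (min_le_left _ _) (by linarith)
      have hm1 := (hμ t htIcc (v m) ⟨m, rfl⟩).2 Lm hLm x hx hgt hx2
      have hm2 := (hμ t htIcc (v m) ⟨m, rfl⟩).2 Lm hLm (rpt t) hrmem hr1 hr2
      have hn1 := (hμ t htIcc (v n) ⟨n, rfl⟩).2 Ln hLn x hx hgt hx2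
      have hn2 := (hμ t htIcc (v n) ⟨n, rfl⟩).2 Ln hLn (rpt t) hrmem hr1 hr2
      have hd : ‖v m (rpt t) - v n (rpt t)‖ < ε/5 := by
        rw [← dist_eq_norm]; exact hdistP (rpt t) hrP
      have hdecomp : v m x - v n x =
          (v m x - Lm) + -(v m (rpt t) - Lm) + (v m (rpt t) - v n (rpt t))
          + (v n (rpt t) - Ln) + -(v n x - Ln) := by abel
      rw [dist_eq_norm, hdecomp]
      have h5 := norm_add5_le (v m x - Lm) (-(v m (rpt t) - Lm))
        (v m (rpt t) - v n (rpt t)) (v n (rpt t) - Ln) (-(v n x - Ln))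
      rw [norm_neg, norm_neg] at h5
      linarith
  exact key.tendstoUniformlyOn_of_tendsto hpt
end

section
/- Let V be a set of regulated functions from [0,a] to a Banach space X. If V is bounded in the supremum norm and equiregulated, then the closed convex hull of V (taken in the supremum norm) is also bounded and equiregulated. -/
open Filter

/-- The closed convex hull of a set of functions `V`, taken with respect to the
supremum norm on `[0,a]`: the set of uniform limits on `[0,a]` of sequences of
elements of the convex hull of `V`. -/
def closedConvexHullSup {X : Type*} [NormedAddCommGroup X] [NormedSpace ℝ X]
    (a : ℝ) (V : Set (ℝ → X)) : Set (ℝ → X) :=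
  {g | ∃ u : ℕ → ℝ → X, (∀ n, u n ∈ convexHull ℝ V) ∧
    TendstoUniformlyOn u g atTop (Set.Icc (0 : ℝ) a)}

/-- If a set `V` of regulated functions `[0,a] → X` is bounded in the supremum
norm and equiregulated, then its closed convex hull (in the supremum norm) is
also bounded and equiregulated. -/
theorem closedConvexHull_bounded_equiregulated {X : Type*} [NormedAddCommGroup X]
    [NormedSpace ℝ X] [CompleteSpace X] (a : ℝ) (ha : 0 < a) (V : Set (ℝ → X))
    (hreg : ∀ f ∈ V, Regulated a f)
    (hbdd : ∃ M : ℝ, ∀ f ∈ V, ∀ t ∈ Set.Icc (0 : ℝ) a, ‖f t‖ ≤ M)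
    (hequi : Equiregulated a V) :
    (∃ M : ℝ, ∀ g ∈ closedConvexHullSup a V, ∀ t ∈ Set.Icc (0 : ℝ) a, ‖g t‖ ≤ M) ∧
      Equiregulated a (closedConvexHullSup a V) := by
  obtain ⟨M, hM⟩ := hbdd
  -- Boundedness on the convex hull
  have hullM : ∀ w ∈ convexHull ℝ V, ∀ t ∈ Set.Icc (0:ℝ) a, ‖w t‖ ≤ M := by
    intro w hw
    have h : w ∈ {w : ℝ → X | ∀ t ∈ Set.Icc (0:ℝ) a, ‖w t‖ ≤ M} := by
      refine convexHull_min hM ?_ hw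
      intro x hx y hy p q hp hq hpq t ht
      calc ‖(p • x + q • y) t‖ = ‖p • x t + q • y t‖ := rfl
        _ ≤ ‖p • x t‖ + ‖q • y t‖ := norm_add_le _ _
        _ = p * ‖x t‖ + q * ‖y t‖ := by
            rw [norm_smul, norm_smul, Real.norm_of_nonneg hp, Real.norm_of_nonneg hq]
        _ ≤ p * M + q * M :=
            add_le_add (mul_le_mul_of_nonneg_left (hx t ht) hp)
              (mul_le_mul_of_nonneg_left (hy t ht) hq)
        _ = M := by rw [← add_mul, hpq, one_mul]
    exact h
  constructor
  · refine ⟨M, ?_⟩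
    rintro g ⟨u, hu, hcu⟩ t ht
    have htend : Tendsto (fun n => u n t) atTop (nhds (g t)) := hcu.tendsto_at ht
    exact le_of_tendsto htend.norm (Eventually.of_forall fun n => hullM (u n) (hu n) t ht)
  · intro α hα t₀ ht₀
    obtain ⟨μ, hμ, hV⟩ := hequi (α/2) (by linarith) t₀ ht₀
    set S : Set (ℝ → X) :=
      {w | ((0 < t₀) → ∃ L : X, Tendsto w (nhdsWithin t₀ (Set.Iio t₀)) (nhds L)) ∧
        (∀ L : X, Tendsto w (nhdsWithin t₀ (Set.Iio t₀)) (nhds L) →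
          ∀ t' ∈ Set.Icc (0:ℝ) a, t₀ - μ < t' → t' < t₀ → ‖L - w t'‖ ≤ α/2) ∧
        ((t₀ < a) → ∃ L : X, Tendsto w (nhdsWithin t₀ (Set.Ioi t₀)) (nhds L)) ∧
        (∀ L : X, Tendsto w (nhdsWithin t₀ (Set.Ioi t₀)) (nhds L) →
          ∀ t' ∈ Set.Icc (0:ℝ) a, t₀ < t' → t' < t₀ + μ → ‖w t' - L‖ ≤ α/2)} with hS
    have hVS : V ⊆ S := by
      intro f hf
      refine ⟨?_, ?_, ?_, ?_⟩
      · intro h0; exact (hreg f hf).1 t₀ ⟨h0, ht₀.2⟩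
      · intro L hL t' ht' h1 h2; exact le_of_lt ((hV f hf).1 L hL t' ht' h1 h2)
      · intro hta; exact (hreg f hf).2 t₀ ⟨ht₀.1, hta⟩
      · intro L hL t' ht' h1 h2; exact le_of_lt ((hV f hf).2 L hL t' ht' h1 h2)
    have hconvS : Convex ℝ S := by
      intro x hx y hy p q hp hq hpq
      refine ⟨?_, ?_, ?_, ?_⟩
      · intro h0
        obtain ⟨L1, hL1⟩ := hx.1 h0
        obtain ⟨L2, hL2⟩ := hy.1 h0
        exact ⟨p • L1 + q • L2, (hL1.const_smul p).add (hL2.const_smul q)⟩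
      · intro L hL t' ht' h1 h2
        have h0 : 0 < t₀ := lt_of_le_of_lt ht'.1 h2
        obtain ⟨L1, hL1⟩ := hx.1 h0
        obtain ⟨L2, hL2⟩ := hy.1 h0
        have hcomb : Tendsto (p • x + q • y) (nhdsWithin t₀ (Set.Iio t₀))
            (nhds (p • L1 + q • L2)) := (hL1.const_smul p).add (hL2.const_smul q)
        have huniq : L = p • L1 + q • L2 := tendsto_nhds_unique hL hcomb
        have b1 := hx.2.1 L1 hL1 t' ht' h1 h2
        have b2 := hy.2.1 L2 hL2 t' ht' h1 h2
        calc ‖L - (p • x + q • y) t'‖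
            = ‖p • (L1 - x t') + q • (L2 - y t')‖ := by
              rw [huniq]
              congr 1
              show p • L1 + q • L2 - (p • x t' + q • y t') = _
              rw [smul_sub, smul_sub]; abel
          _ ≤ ‖p • (L1 - x t')‖ + ‖q • (L2 - y t')‖ := norm_add_le _ _
          _ = p * ‖L1 - x t'‖ + q * ‖L2 - y t'‖ := by
              rw [norm_smul, norm_smul, Real.norm_of_nonneg hp, Real.norm_of_nonneg hq]
          _ ≤ p * (α/2) + q * (α/2) :=
              add_le_add (mul_le_mul_of_nonneg_left b1 hp) (mul_le_mul_of_nonneg_left b2 hq)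
          _ = α/2 := by rw [← add_mul, hpq, one_mul]
      · intro hta
        obtain ⟨L1, hL1⟩ := hx.2.2.1 hta
        obtain ⟨L2, hL2⟩ := hy.2.2.1 hta
        exact ⟨p • L1 + q • L2, (hL1.const_smul p).add (hL2.const_smul q)⟩
      · intro L hL t' ht' h1 h2
        have hta : t₀ < a := lt_of_lt_of_le h1 ht'.2
        obtain ⟨L1, hL1⟩ := hx.2.2.1 hta
        obtain ⟨L2, hL2⟩ := hy.2.2.1 hta
        have hcomb : Tendsto (p • x + q • y) (nhdsWithin t₀ (Set.Ioi t₀))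
            (nhds (p • L1 + q • L2)) := (hL1.const_smul p).add (hL2.const_smul q)
        have huniq : L = p • L1 + q • L2 := tendsto_nhds_unique hL hcomb
        have b1 := hx.2.2.2 L1 hL1 t' ht' h1 h2
        have b2 := hy.2.2.2 L2 hL2 t' ht' h1 h2
        calc ‖(p • x + q • y) t' - L‖
            = ‖p • (x t' - L1) + q • (y t' - L2)‖ := by
              rw [huniq]
              congr 1
              show p • x t' + q • y t' - (p • L1 + q • L2) = _
              rw [smul_sub, smul_sub]; abel
          _ ≤ ‖p • (x t' - L1)‖ + ‖q • (y t' - L2)‖ := norm_add_le _ _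
          _ = p * ‖x t' - L1‖ + q * ‖y t' - L2‖ := by
              rw [norm_smul, norm_smul, Real.norm_of_nonneg hp, Real.norm_of_nonneg hq]
          _ ≤ p * (α/2) + q * (α/2) :=
              add_le_add (mul_le_mul_of_nonneg_left b1 hp) (mul_le_mul_of_nonneg_left b2 hq)
          _ = α/2 := by rw [← add_mul, hpq, one_mul]
    have hullS : convexHull ℝ V ⊆ S := convexHull_min hVS hconvS
    refine ⟨μ, hμ, ?_⟩
    rintro g ⟨u, hu, hcu⟩
    constructor
    · intro L hL t' ht' h1 h2
      have h0 : 0 < t₀ := lt_of_le_of_lt ht'.1 h2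
      obtain ⟨n, hn⟩ := ((Metric.tendstoUniformlyOn_iff.mp hcu) (α/8) (by linarith)).exists
      have hwS := hullS (hu n)
      obtain ⟨Ln, hLn⟩ := hwS.1 h0
      have hev : ∀ᶠ s in nhdsWithin t₀ (Set.Iio t₀), ‖u n s - g s‖ ≤ α/8 := by
        have hpos : ∀ᶠ s in nhdsWithin t₀ (Set.Iio t₀), 0 < s :=
          eventually_nhdsWithin_of_eventually_nhds (eventually_gt_nhds h0)
        have hlt : ∀ᶠ s in nhdsWithin t₀ (Set.Iio t₀), s ∈ Set.Iio t₀ := self_mem_nhdsWithin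
        filter_upwards [hpos, hlt] with s hs1 hs2
        have hsI : s ∈ Set.Icc (0:ℝ) a := ⟨le_of_lt hs1, le_of_lt (lt_of_lt_of_le hs2 ht₀.2)⟩
        have := hn s hsI
        rw [dist_comm, dist_eq_norm] at this
        exact le_of_lt this
      have hd : Tendsto (fun s => u n s - g s) (nhdsWithin t₀ (Set.Iio t₀))
          (nhds (Ln - L)) := hLn.sub hL
      have hLnL : ‖Ln - L‖ ≤ α/8 := le_of_tendsto hd.norm hev
      have hb : ‖Ln - u n t'‖ ≤ α/2 := hwS.2.1 Ln hLn t' ht' h1 h2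
      have hgt : ‖u n t' - g t'‖ ≤ α/8 := by
        have := hn t' ht'
        rw [dist_comm, dist_eq_norm] at this
        exact le_of_lt this
      calc ‖L - g t'‖ = ‖(L - Ln) + (Ln - u n t') + (u n t' - g t')‖ := by congr 1; abel
        _ ≤ ‖L - Ln‖ + ‖Ln - u n t'‖ + ‖u n t' - g t'‖ := norm_add₃_le
        _ ≤ α/8 + α/2 + α/8 := by
            refine add_le_add (add_le_add ?_ hb) hgt
            rw [norm_sub_rev]; exact hLnL
        _ < α := by linarith
    · intro L hL t' ht' h1 h2
      have hta : t₀ < a := lt_of_lt_of_le h1 ht'.2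
      obtain ⟨n, hn⟩ := ((Metric.tendstoUniformlyOn_iff.mp hcu) (α/8) (by linarith)).exists
      have hwS := hullS (hu n)
      obtain ⟨Ln, hLn⟩ := hwS.2.2.1 hta
      have hev : ∀ᶠ s in nhdsWithin t₀ (Set.Ioi t₀), ‖u n s - g s‖ ≤ α/8 := by
        have hlta : ∀ᶠ s in nhdsWithin t₀ (Set.Ioi t₀), s < a :=
          eventually_nhdsWithin_of_eventually_nhds (eventually_lt_nhds hta)
        have hgt0 : ∀ᶠ s in nhdsWithin t₀ (Set.Ioi t₀), s ∈ Set.Ioi t₀ := self_mem_nhdsWithin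
        filter_upwards [hlta, hgt0] with s hs1 hs2
        have hsI : s ∈ Set.Icc (0:ℝ) a := ⟨le_trans ht₀.1 (le_of_lt hs2), le_of_lt hs1⟩
        have := hn s hsI
        rw [dist_comm, dist_eq_norm] at this
        exact le_of_lt this
      have hd : Tendsto (fun s => u n s - g s) (nhdsWithin t₀ (Set.Ioi t₀))
          (nhds (Ln - L)) := hLn.sub hL
      have hLnL : ‖Ln - L‖ ≤ α/8 := le_of_tendsto hd.norm hev
      have hb : ‖u n t' - Ln‖ ≤ α/2 := hwS.2.2.2 Ln hLn t' ht' h1 h2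
      have hgt : ‖g t' - u n t'‖ ≤ α/8 := by
        have := hn t' ht'
        rw [dist_eq_norm] at this
        exact le_of_lt this
      calc ‖g t' - L‖ = ‖(g t' - u n t') + (u n t' - Ln) + (Ln - L)‖ := by congr 1; abel
        _ ≤ ‖g t' - u n t'‖ + ‖u n t' - Ln‖ + ‖Ln - L‖ := norm_add₃_le
        _ ≤ α/8 + α/2 + α/8 := add_le_add (add_le_add hgt hb) hLnL
        _ < α := by linarith
end

section
/- Let X be a Banach space, μ a finite Borel measure on ℝ, t₀ ≤ a real numbers, and f : ℝ → X Bochner integrable on [t₀,a] with respect to μ. Define p(t) = ∫_{[t₀,t)} f dμ for t ∈ [t₀,a]. Then: (1) p is left-continuous at every t ∈ (t₀,a], i.e., p(s) → p(t) as s → t⁻; and (2) for every t ∈ [t₀,a), the right limit of p at t exists and equals p(t) + f(t) · μ({t}), i.e., p(s) → p(t) + μ({t}) · f(t) as s → t⁺. -/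
/-!
Both one-sided limits are dominated convergence for set integrals, the dominating function
being `‖f‖` on `[t₀, a]`: as `s → t⁻` the intervals `[t₀, s)` converge pointwise to `[t₀, t)`,
while as `s → t⁺` they converge to `[t₀, t]`, whose integral exceeds the one over `[t₀, t)` by
the contribution `μ({t}) • f(t)` of the atom at `t`.
-/

open Filter MeasureTheory Set Topology

namespace MeasureTheory

theorem tendsto_setIntegral_of_ae_tendsto_indicator {α E ι : Type*} [MeasurableSpace α]
    [NormedAddCommGroup E] [NormedSpace ℝ E] {μ : Measure α} {L : Filter ι}
    [L.IsCountablyGenerated] {As : ι → Set α} {A B : Set α} {f : α → E}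
    (hf : IntegrableOn f B μ) (hB : MeasurableSet B) (hA : MeasurableSet A)
    (hAs : ∀ᶠ i in L, MeasurableSet (As i)) (hAs_sub : ∀ᶠ i in L, As i ⊆ B)
    (h_lim : ∀ᵐ x ∂μ, ∀ᶠ i in L, x ∈ As i ↔ x ∈ A) :
    Tendsto (fun i ↦ ∫ x in As i, f x ∂μ) L (𝓝 (∫ x in A, f x ∂μ)) := by
  have h_ind : ∀ᶠ i in L, ∫ x in As i, f x ∂μ = ∫ x, (As i).indicator f x ∂μ := by
    filter_upwards [hAs] with i hi using (integral_indicator hi).symm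
  rw [← integral_indicator hA]
  refine Tendsto.congr' (EventuallyEq.symm h_ind) <|
    tendsto_integral_filter_of_dominated_convergence (fun x ↦ ‖B.indicator f x‖) ?_ ?_
      (hf.integrable_indicator hB).norm ?_
  · filter_upwards [hAs, hAs_sub] with i hi hi_sub
    exact ((hf.mono_set hi_sub).integrable_indicator hi).aestronglyMeasurable
  · filter_upwards [hAs_sub] with i hi
    exact ae_of_all _ (norm_indicator_le_of_subset hi f)
  · filter_upwards [h_lim] with x hx
    exact tendsto_const_nhds.congr' <| hx.mono fun i hi ↦ indicator_eq_indicator hi.symm rfl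

end MeasureTheory

section

variable {α : Type*} [LinearOrder α] [TopologicalSpace α] [OrderTopology α]

theorem eventually_mem_Ico_iff_nhdsLT (a b x : α) :
    ∀ᶠ s in 𝓝[<] b, x ∈ Ico a s ↔ x ∈ Ico a b := by
  rcases lt_or_ge x b with hxb | hbx
  · filter_upwards [Ioo_mem_nhdsLT hxb] with s hs
    simp only [mem_Ico, hs.1, hxb]
  · filter_upwards [self_mem_nhdsWithin] with s (hs : s < b)
    simp only [mem_Ico, hbx.not_gt, (hs.trans_le hbx).not_gt, and_false]

theorem eventually_mem_Ico_iff_nhdsGT (a b x : α) :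
    ∀ᶠ s in 𝓝[>] b, x ∈ Ico a s ↔ x ∈ Icc a b := by
  rcases le_or_gt x b with hxb | hbx
  · filter_upwards [self_mem_nhdsWithin] with s (hs : b < s)
    simp only [mem_Ico, mem_Icc, hxb, hxb.trans_lt hs]
  · filter_upwards [Ioo_mem_nhdsGT hbx] with s hs
    simp only [mem_Ico, mem_Icc, hs.2.not_gt, hbx.not_ge, and_false]

end

theorem setIntegral_Icc_eq_setIntegral_Ico_add {α E : Type*} [LinearOrder α] [MeasurableSpace α]
    [MeasurableSingletonClass α] [NormedAddCommGroup E] [NormedSpace ℝ E] [CompleteSpace E]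
    {μ : Measure α} {f : α → E} {a b : α} (hab : a ≤ b) (hf : IntegrableOn f (Icc a b) μ) :
    ∫ x in Icc a b, f x ∂μ = ∫ x in Ico a b, f x ∂μ + μ.real {b} • f b := by
  rw [← Ico_union_right hab, setIntegral_union (by simp) (measurableSet_singleton b)
    (hf.mono_set Ico_subset_Icc_self) (hf.mono_set (by simp [hab])), integral_singleton]

theorem stieltjes_primitive_regulated_general {X : Type*} [NormedAddCommGroup X]
    [NormedSpace ℝ X] [CompleteSpace X]
    (μ : Measure ℝ) (t₀ a : ℝ)
    (f : ℝ → X) (hf : IntegrableOn f (Set.Icc t₀ a) μ) :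
    (∀ t ∈ Set.Ioc t₀ a,
      Tendsto (fun s => ∫ x in Set.Ico t₀ s, f x ∂μ)
        (nhdsWithin t (Set.Iio t)) (nhds (∫ x in Set.Ico t₀ t, f x ∂μ))) ∧
    (∀ t ∈ Set.Ico t₀ a,
      Tendsto (fun s => ∫ x in Set.Ico t₀ s, f x ∂μ)
        (nhdsWithin t (Set.Ioi t))
        (nhds ((∫ x in Set.Ico t₀ t, f x ∂μ) + (μ {t}).toReal • f t))) := by
  refine ⟨fun t ht ↦ ?_, fun t ht ↦ ?_⟩
  · refine tendsto_setIntegral_of_ae_tendsto_indicator hf measurableSet_Icc measurableSet_Ico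
      (.of_forall fun _ ↦ measurableSet_Ico) ?_ (ae_of_all _ (eventually_mem_Ico_iff_nhdsLT t₀ t))
    filter_upwards [self_mem_nhdsWithin] with s (hs : s < t)
    exact Ico_subset_Icc_self.trans (Icc_subset_Icc_right (hs.le.trans ht.2))
  · rw [← measureReal_def, ← setIntegral_Icc_eq_setIntegral_Ico_add ht.1
      (hf.mono_set (Icc_subset_Icc_right ht.2.le))]
    refine tendsto_setIntegral_of_ae_tendsto_indicator hf measurableSet_Icc measurableSet_Icc
      (.of_forall fun _ ↦ measurableSet_Ico) ?_ (ae_of_all _ (eventually_mem_Ico_iff_nhdsGT t₀ t))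
    filter_upwards [Ioo_mem_nhdsGT ht.2] with s hs
    exact Ico_subset_Icc_self.trans (Icc_subset_Icc_right hs.2.le)

/-- Jump formula for the Stieltjes primitive `p(t) = ∫_{[t₀,t)} f dμ` of a
Bochner integrable function `f` with respect to a finite Borel measure `μ`:
`p` is left-continuous on `(t₀,a]`, and at every `t ∈ [t₀,a)` the right limit
of `p` exists and equals `p(t) + μ({t}) • f(t)`. -/
theorem stieltjes_primitive_regulated {X : Type*} [NormedAddCommGroup X]
    [NormedSpace ℝ X] [CompleteSpace X]
    (μ : Measure ℝ) [IsFiniteMeasure μ] (t₀ a : ℝ) (hta : t₀ ≤ a)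
    (f : ℝ → X) (hf : IntegrableOn f (Set.Icc t₀ a) μ) :
    (∀ t ∈ Set.Ioc t₀ a,
      Tendsto (fun s => ∫ x in Set.Ico t₀ s, f x ∂μ)
        (nhdsWithin t (Set.Iio t)) (nhds (∫ x in Set.Ico t₀ t, f x ∂μ))) ∧
    (∀ t ∈ Set.Ico t₀ a,
      Tendsto (fun s => ∫ x in Set.Ico t₀ s, f x ∂μ)
        (nhdsWithin t (Set.Ioi t))
        (nhds ((∫ x in Set.Ico t₀ t, f x ∂μ) + (μ {t}).toReal • f t))) :=
  stieltjes_primitive_regulated_general μ t₀ a f hf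
end

section
/- Let X be a Banach space and U a bounded subset of X. Then λ(convexHull(U)) = λ(U), i.e., the Hausdorff measure of noncompactness of the convex hull of U equals that of U. -/
/-!
A finite cover by balls of radii `< α` is the same as a thickening `thickening r t` of a finite set
`t` with `r < α`. Such a thickening of `t` lies in the convex set `thickening r (convexHull ℝ t)`,
which therefore contains `convexHull ℝ U`. As `convexHull ℝ t` is compact, it lies in a thickening
`thickening ε t'` of a finite set `t'` with `ε < α - r`, so `convexHull ℝ U ⊆ thickening (r + ε) t'`
with `r + ε < α`.
-/

open Metric Set

/-- The Hausdorff measure of noncompactness of a subset `U` of a normed space: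
the infimum of all `α > 0` such that `U` can be covered by finitely many open
balls of radius smaller than `α`. -/
noncomputable def hausdorffMNC {X : Type*} [NormedAddCommGroup X] (U : Set X) : ℝ :=
  sInf {α : ℝ | 0 < α ∧ ∃ (n : ℕ) (c : Fin n → X) (r : Fin n → ℝ),
    (∀ i, r i < α) ∧ U ⊆ ⋃ i, Metric.ball (c i) (r i)}

theorem exists_lt_forall_le_of_finite {ι β : Type*} [Finite ι] [LinearOrder β] [NoMinOrder β]
    {f : ι → β} {a : β} (h : ∀ i, f i < a) : ∃ b < a, ∀ i, f i ≤ b := by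
  cases isEmpty_or_nonempty ι
  · obtain ⟨b, hb⟩ := exists_lt a
    exact ⟨b, hb, isEmptyElim⟩
  · obtain ⟨j, hj⟩ := Finite.exists_max f
    exact ⟨f j, h j, hj⟩

section BallCover

variable {X : Type*} [PseudoMetricSpace X]

def HasFiniteBallCoverLT (U : Set X) (α : ℝ) : Prop :=
  ∃ (n : ℕ) (c : Fin n → X) (r : Fin n → ℝ), (∀ i, r i < α) ∧ U ⊆ ⋃ i, ball (c i) (r i)

theorem HasFiniteBallCoverLT.mono {U V : Set X} {α : ℝ} (hVU : V ⊆ U)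
    (hU : HasFiniteBallCoverLT U α) : HasFiniteBallCoverLT V α :=
  let ⟨n, c, r, hr, hcover⟩ := hU
  ⟨n, c, r, hr, hVU.trans hcover⟩

theorem hasFiniteBallCoverLT_iff {U : Set X} {α : ℝ} :
    HasFiniteBallCoverLT U α ↔ ∃ t : Set X, t.Finite ∧ ∃ r < α, U ⊆ thickening r t := by
  constructor
  · rintro ⟨n, c, r, hr, hU⟩
    obtain ⟨M, hMα, hrM⟩ := exists_lt_forall_le_of_finite hr
    refine ⟨range c, finite_range c, M, hMα, hU.trans ?_⟩
    rw [thickening_eq_biUnion_ball, biUnion_range]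
    exact iUnion_mono fun i => ball_subset_ball (hrM i)
  · rintro ⟨t, ht, r, hrα, hU⟩
    obtain ⟨n, c, rfl⟩ := ht.fin_embedding
    refine ⟨n, c, fun _ => r, fun _ => hrα, ?_⟩
    rwa [thickening_eq_biUnion_ball, biUnion_range] at hU

theorem IsCompact.exists_finite_thickening_subset_thickening {K : Set X} (hK : IsCompact K)
    {ε : ℝ} (hε : 0 < ε) (δ : ℝ) :
    ∃ t : Set X, t.Finite ∧ thickening δ K ⊆ thickening (δ + ε) t := by
  obtain ⟨t, -, ht, hKt⟩ := finite_cover_balls_of_compact hK hε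
  refine ⟨t, ht, (thickening_subset_of_subset δ ?_).trans (thickening_thickening_subset δ ε t)⟩
  rwa [thickening_eq_biUnion_ball]

end BallCover

section ConvexHull

variable {X : Type*} [NormedAddCommGroup X] [NormedSpace ℝ X]

theorem HasFiniteBallCoverLT.convexHull {U : Set X} {α : ℝ} (hU : HasFiniteBallCoverLT U α) :
    HasFiniteBallCoverLT (_root_.convexHull ℝ U) α := by
  obtain ⟨t, ht, r, hrα, hUt⟩ := hasFiniteBallCoverLT_iff.mp hU
  have hhull : _root_.convexHull ℝ U ⊆ thickening r (_root_.convexHull ℝ t) :=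
    convexHull_min (hUt.trans (thickening_subset_of_subset r (subset_convexHull ℝ t)))
      ((convex_convexHull ℝ t).thickening r)
  obtain ⟨t', ht', hsub⟩ :=
    (ht.isCompact_convexHull (𝕜 := ℝ)).exists_finite_thickening_subset_thickening
      (half_pos (sub_pos.mpr hrα)) r
  exact hasFiniteBallCoverLT_iff.mpr ⟨t', ht', _, by linarith, hhull.trans hsub⟩

theorem hasFiniteBallCoverLT_convexHull_iff {U : Set X} {α : ℝ} :
    HasFiniteBallCoverLT (convexHull ℝ U) α ↔ HasFiniteBallCoverLT U α :=
  ⟨.mono (subset_convexHull ℝ U), .convexHull⟩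

end ConvexHull

theorem hausdorffMNC_convexHull_general {X : Type*} [NormedAddCommGroup X]
    [NormedSpace ℝ X] (U : Set X) :
    hausdorffMNC (convexHull ℝ U) = hausdorffMNC U := by
  change sInf {α | 0 < α ∧ HasFiniteBallCoverLT (convexHull ℝ U) α} =
    sInf {α | 0 < α ∧ HasFiniteBallCoverLT U α}
  simp_rw [hasFiniteBallCoverLT_convexHull_iff]

/-- The Hausdorff measure of noncompactness of the convex hull of a bounded set
equals that of the set itself. -/
theorem hausdorffMNC_convexHull {X : Type*} [NormedAddCommGroup X]
    [NormedSpace ℝ X] [CompleteSpace X]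
    (U : Set X) (hU : Bornology.IsBounded U) :
    hausdorffMNC (convexHull ℝ U) = hausdorffMNC U :=
  hausdorffMNC_convexHull_general U
end

section
/- Let V be a set of regulated functions from [0,a] to a Banach space X that is bounded in the supremum norm and equiregulated. Define the uniform Hausdorff measure of noncompactness λ∞(V) = inf{α > 0 : there is a finite set F of functions from [0,a] to X such that every v ∈ V satisfies sup_{t∈[0,a]} ‖v(t) − w(t)‖ < α for some w ∈ F}. Then λ∞(V) = sup{λ(V(t)) : t ∈ [0,a]}, where V(t) = {v(t) : v ∈ V} ⊆ X. -/
open Filter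

/-- The uniform Hausdorff measure of noncompactness of a set of functions on
`[0,a]`: the infimum of all `α > 0` for which there is a finite set `F` of
functions such that every `v ∈ V` satisfies `sup_{t ∈ [0,a]} ‖v t - w t‖ < α`
for some `w ∈ F`. -/
noncomputable def uniformHausdorffMNC {X : Type*} [NormedAddCommGroup X]
    (a : ℝ) (V : Set (ℝ → X)) : ℝ :=
  sInf {α : ℝ | 0 < α ∧ ∃ F : Set (ℝ → X), F.Finite ∧ ∀ v ∈ V, ∃ w ∈ F,
    ∃ r < α, ∀ t ∈ Set.Icc (0 : ℝ) a, ‖v t - w t‖ ≤ r}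

-- AUXILIARY

def MNCset {X : Type*} [NormedAddCommGroup X] (U : Set X) : Set ℝ :=
  {α : ℝ | 0 < α ∧ ∃ (n : ℕ) (c : Fin n → X) (r : Fin n → ℝ),
    (∀ i, r i < α) ∧ U ⊆ ⋃ i, Metric.ball (c i) (r i)}

lemma hausdorffMNC_def {X : Type*} [NormedAddCommGroup X] (U : Set X) :
    hausdorffMNC U = sInf (MNCset U) := rfl

lemma MNCset_bddBelow {X : Type*} [NormedAddCommGroup X] (U : Set X) :
    BddBelow (MNCset U) := ⟨0, fun _ hx => hx.1.le⟩

lemma MNCset_nonempty {X : Type*} [NormedAddCommGroup X] {U : Set X} {M : ℝ}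
    (h : ∀ x ∈ U, ‖x‖ ≤ M) : (MNCset U).Nonempty := by
  refine ⟨max M 0 + 2, by positivity, 1, fun _ => 0, fun _ => max M 0 + 1,
    fun _ => by change max M 0 + 1 < max M 0 + 2; linarith, ?_⟩
  intro x hx
  refine Set.mem_iUnion.mpr ⟨0, ?_⟩
  have h1 := h x hx
  have h2 : M ≤ max M 0 := le_max_left M 0
  simp only [Metric.mem_ball, dist_zero_right]
  linarith

lemma hausdorffMNC_nonneg {X : Type*} [NormedAddCommGroup X] (U : Set X) :
    0 ≤ hausdorffMNC U := Real.sInf_nonneg fun _ hx => hx.1.le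

/-- For a set `V` of regulated functions on `[0,a]` that is bounded in the
supremum norm and equiregulated, the Hausdorff measure of noncompactness of `V`
in the supremum norm equals `sup {λ(V(t)) : t ∈ [0,a]}`. -/
theorem uniformHausdorffMNC_eq_sup {X : Type*} [NormedAddCommGroup X]
    [NormedSpace ℝ X] [CompleteSpace X] (a : ℝ) (ha : 0 < a)
    (V : Set (ℝ → X)) (hreg : ∀ f ∈ V, Regulated a f)
    (hbdd : ∃ M : ℝ, ∀ f ∈ V, ∀ t ∈ Set.Icc (0 : ℝ) a, ‖f t‖ ≤ M)
    (hequi : Equiregulated a V) :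
    uniformHausdorffMNC a V =
      sSup ((fun t => hausdorffMNC ((fun v : ℝ → X => v t) '' V)) '' Set.Icc (0 : ℝ) a) := by
  classical
  obtain ⟨M, hM⟩ := hbdd
  set USet : Set ℝ := {α : ℝ | 0 < α ∧ ∃ F : Set (ℝ → X), F.Finite ∧ ∀ v ∈ V, ∃ w ∈ F,
    ∃ r < α, ∀ t ∈ Set.Icc (0 : ℝ) a, ‖v t - w t‖ ≤ r} with hUSet
  have hΛdef : uniformHausdorffMNC a V = sInf USet := rfl
  set Λ := uniformHausdorffMNC a V with hΛ
  set σ := sSup ((fun t => hausdorffMNC ((fun v : ℝ → X => v t) '' V)) '' Set.Icc (0 : ℝ) a)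
    with hσ
  -- USet is nonempty
  have hU_ne : USet.Nonempty := by
    refine ⟨max M 0 + 2, by positivity, {0}, Set.finite_singleton _, fun v hv => ?_⟩
    refine ⟨0, rfl, max M 0 + 1, by linarith, fun t ht => ?_⟩
    have h1 := hM v hv t ht
    have h2 : M ≤ max M 0 := le_max_left M 0
    simp only [Pi.zero_apply, sub_zero]
    linarith
  have hU_bdd : BddBelow USet := ⟨0, fun _ hx => hx.1.le⟩
  -- bound at each point: functions bounded
  have hVtbd : ∀ s : ℝ, s ∈ Set.Icc (0:ℝ) a →
      ∀ x ∈ (fun v : ℝ → X => v s) '' V, ‖x‖ ≤ M := by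
    rintro s hs x ⟨v, hv, rfl⟩
    exact hM v hv s hs
  -- Step B : each pointwise MNC is ≤ Λ
  have hB : ∀ t ∈ Set.Icc (0:ℝ) a, hausdorffMNC ((fun v : ℝ → X => v t) '' V) ≤ Λ := by
    intro t ht
    rw [hΛdef]
    refine le_csInf hU_ne fun β hβ => ?_
    obtain ⟨hβ0, F, hFfin, hFprop⟩ := hβ
    refine le_of_forall_pos_le_add fun δ hδ => ?_
    rw [hausdorffMNC_def]
    refine csInf_le (MNCset_bddBelow _) ?_
    obtain ⟨n, f, hf⟩ := hFfin.fin_embedding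
    refine ⟨by linarith, n, fun i => f i t, fun _ => β, fun _ => by linarith, ?_⟩
    rintro x ⟨v, hv, rfl⟩
    obtain ⟨w, hwF, r', hr', hbnd⟩ := hFprop v hv
    rw [← hf] at hwF
    obtain ⟨i, rfl⟩ := hwF
    refine Set.mem_iUnion.mpr ⟨i, ?_⟩
    simp only [Metric.mem_ball, dist_eq_norm]
    exact lt_of_le_of_lt (hbnd t ht) hr'
  -- Step C : σ ≤ Λ
  have himg_ne : ((fun t => hausdorffMNC ((fun v : ℝ → X => v t) '' V)) ''
      Set.Icc (0:ℝ) a).Nonempty := ⟨_, Set.mem_image_of_mem _ (Set.mem_Icc.mpr ⟨le_refl 0, ha.le⟩)⟩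
  have himg_bdd : BddAbove ((fun t => hausdorffMNC ((fun v : ℝ → X => v t) '' V)) ''
      Set.Icc (0:ℝ) a) := by
    refine ⟨Λ, ?_⟩
    rintro x ⟨t, ht, rfl⟩
    exact hB t ht
  have hC : σ ≤ Λ := csSup_le himg_ne (by rintro x ⟨t, ht, rfl⟩; exact hB t ht)
  have hσ0 : 0 ≤ σ := by
    have h0mem : hausdorffMNC ((fun v : ℝ → X => v 0) '' V) ∈
        ((fun t => hausdorffMNC ((fun v : ℝ → X => v t) '' V)) '' Set.Icc (0:ℝ) a) :=
      Set.mem_image_of_mem _ (Set.mem_Icc.mpr ⟨le_refl 0, ha.le⟩)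
    exact le_trans (hausdorffMNC_nonneg _) (le_csSup himg_bdd h0mem)
  -- Step D : Λ ≤ σ
  have hD : Λ ≤ σ := by
    refine le_of_forall_pos_le_add fun ε hε => ?_
    have hε8 : (0:ℝ) < ε/8 := by linarith
    -- equiregularity moduli
    choose μ hμpos hμ using fun (t : ℝ) (ht : t ∈ Set.Icc (0:ℝ) a) => hequi (ε/8) hε8 t ht
    -- compactness: finite subcover
    set ι := ↥(Set.Icc (0:ℝ) a) with hι
    set U : ι → Set ℝ := fun i => Set.Ioo (i.1 - μ i.1 i.2) (i.1 + μ i.1 i.2) with hU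
    have hcov : Set.Icc (0:ℝ) a ⊆ ⋃ i : ι, U i := by
      intro t ht
      refine Set.mem_iUnion.mpr ⟨⟨t, ht⟩, ?_⟩
      have := hμpos t ht
      constructor <;> simp <;> linarith
    obtain ⟨T, hT⟩ := isCompact_Icc.elim_finite_subcover U (fun _ => isOpen_Ioo) hcov
    -- choice of covering interval
    have hchoice : ∀ t ∈ Set.Icc (0:ℝ) a, ∃ i ∈ T, t ∈ U i := by
      intro t ht
      have := hT ht
      simpa using this
    choose h0 h0T h0mem using hchoice
    -- sample points
    set mL : ι → ℝ := fun i => i.1 - min (μ i.1 i.2) i.1 / 2 with hmL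
    set mR : ι → ℝ := fun i => i.1 + min (μ i.1 i.2) (a - i.1) / 2 with hmR
    set S : Finset ℝ := T.image (fun i => (i.1 : ℝ)) ∪ T.image mL ∪ T.image mR with hS
    -- S ⊆ Icc
    have hmL_mem : ∀ i : ι, mL i ∈ Set.Icc (0:ℝ) a := by
      intro i
      have h1 := i.2.1
      have h2 := i.2.2
      have h3 := hμpos i.1 i.2
      have h4 : min (μ i.1 i.2) i.1 ≤ i.1 := min_le_right _ _
      have h5 : 0 ≤ min (μ i.1 i.2) i.1 := le_min h3.le h1
      constructor <;> simp only [hmL] <;> linarith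
    have hmR_mem : ∀ i : ι, mR i ∈ Set.Icc (0:ℝ) a := by
      intro i
      have h1 := i.2.1
      have h2 := i.2.2
      have h3 := hμpos i.1 i.2
      have h4 : min (μ i.1 i.2) (a - i.1) ≤ a - i.1 := min_le_right _ _
      have h5 : 0 ≤ min (μ i.1 i.2) (a - i.1) := le_min h3.le (by linarith)
      constructor <;> simp only [hmR] <;> linarith
    have hS_sub : ∀ s ∈ S, s ∈ Set.Icc (0:ℝ) a := by
      intro s hs
      simp only [hS, Finset.mem_union, Finset.mem_image] at hs
      rcases hs with (⟨i, _, rfl⟩ | ⟨i, _, rfl⟩) | ⟨i, _, rfl⟩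
      · exact i.2
      · exact hmL_mem i
      · exact hmR_mem i
    -- the sampling map p
    set p : ℝ → ℝ := fun t =>
      if ht : t ∈ Set.Icc (0:ℝ) a then
        if t < (h0 t ht).1 then mL (h0 t ht)
        else if (h0 t ht).1 < t then mR (h0 t ht)
        else t
      else 0 with hp
    -- key oscillation property
    have hkey : ∀ t (ht : t ∈ Set.Icc (0:ℝ) a), p t ∈ S ∧
        ∀ v ∈ V, ‖v t - v (p t)‖ ≤ ε/4 := by
      intro t ht
      set i := h0 t ht with hi
      have hiT := h0T t ht
      have hmem := h0mem t ht
      simp only [hU, Set.mem_Ioo] at hmem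
      rw [hp]
      simp only [dif_pos ht, ← hi]
      rcases lt_trichotomy t i.1 with hlt | heq | hgt
      · rw [if_pos hlt]
        have hi0 : (0:ℝ) < i.1 := lt_of_le_of_lt ht.1 hlt
        have hμp := hμpos i.1 i.2
        have hminpos : 0 < min (μ i.1 i.2) i.1 := lt_min hμp hi0
        have hmLlt : mL i < i.1 := by simp only [hmL]; linarith
        have hmLgt : i.1 - μ i.1 i.2 < mL i := by
          have : min (μ i.1 i.2) i.1 ≤ μ i.1 i.2 := min_le_left _ _
          simp only [hmL]; linarith
        constructor
        · simp only [hS, Finset.mem_union, Finset.mem_image]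
          exact Or.inl (Or.inr ⟨i, hiT, rfl⟩)
        · intro v hv
          obtain ⟨L, hL⟩ := (hreg v hv).1 i.1 ⟨hi0, i.2.2⟩
          have he := (hμ i.1 i.2 v hv).1 L hL
          have h1 := he t ht hmem.1 hlt
          have h2 := he (mL i) (hmL_mem i) hmLgt hmLlt
          have : v t - v (mL i) = (L - v (mL i)) - (L - v t) := by abel
          rw [this]
          calc ‖(L - v (mL i)) - (L - v t)‖ ≤ ‖L - v (mL i)‖ + ‖L - v t‖ := norm_sub_le _ _
            _ ≤ ε/4 := by linarith
      · rw [if_neg (by rw [heq]; exact lt_irrefl _), if_neg (by rw [heq]; exact lt_irrefl _)]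
        constructor
        · simp only [hS, Finset.mem_union, Finset.mem_image]
          exact Or.inl (Or.inl ⟨i, hiT, heq.symm⟩)
        · intro v hv
          simp only [sub_self, norm_zero]
          linarith
      · rw [if_neg (not_lt.mpr hgt.le), if_pos hgt]
        have hia : i.1 < a := lt_of_lt_of_le hgt ht.2
        have hμp := hμpos i.1 i.2
        have hminpos : 0 < min (μ i.1 i.2) (a - i.1) := lt_min hμp (by linarith)
        have hmRgt : i.1 < mR i := by simp only [hmR]; linarith
        have hmRlt : mR i < i.1 + μ i.1 i.2 := by
          have : min (μ i.1 i.2) (a - i.1) ≤ μ i.1 i.2 := min_le_left _ _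
          simp only [hmR]; linarith
        constructor
        · simp only [hS, Finset.mem_union, Finset.mem_image]
          exact Or.inr ⟨i, hiT, rfl⟩
        · intro v hv
          obtain ⟨L, hL⟩ := (hreg v hv).2 i.1 ⟨i.2.1, hia⟩
          have he := (hμ i.1 i.2 v hv).2 L hL
          have h1 := he t ht hgt hmem.2
          have h2 := he (mR i) (hmR_mem i) hmRgt hmRlt
          have : v t - v (mR i) = (v t - L) - (v (mR i) - L) := by abel
          rw [this]
          calc ‖(v t - L) - (v (mR i) - L)‖ ≤ ‖v t - L‖ + ‖v (mR i) - L‖ := norm_sub_le _ _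
            _ ≤ ε/4 := by linarith
    -- finite covers at each sample point
    have hcovS : ∀ s : ℝ, s ∈ S → ∃ (n : ℕ) (c : Fin n → X),
        ∀ v ∈ V, ∃ i : Fin n, ‖v s - c i‖ < σ + ε/8 := by
      intro s hs
      have hsIcc := hS_sub s hs
      have hle : hausdorffMNC ((fun v : ℝ → X => v s) '' V) ≤ σ :=
        le_csSup himg_bdd (Set.mem_image_of_mem _ hsIcc)
      have hlt : hausdorffMNC ((fun v : ℝ → X => v s) '' V) < σ + ε/8 := by linarith
      rw [hausdorffMNC_def] at hlt
      have hMne := MNCset_nonempty (hVtbd s hsIcc)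
      obtain ⟨β, hβmem, hβlt⟩ := (csInf_lt_iff (MNCset_bddBelow _) hMne).mp hlt
      obtain ⟨hβ0, n, c, r, hr, hcover⟩ := hβmem
      refine ⟨n, c, fun v hv => ?_⟩
      have : v s ∈ ⋃ i, Metric.ball (c i) (r i) := hcover ⟨v, hv, rfl⟩
      obtain ⟨i, hi⟩ := Set.mem_iUnion.mp this
      refine ⟨i, ?_⟩
      rw [Metric.mem_ball, dist_eq_norm] at hi
      calc ‖v s - c i‖ < r i := hi
        _ < β := hr i
        _ < σ + ε/8 := hβlt
    choose nS cS hcS using hcovS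
    -- the finite approximating family
    set W : ((s : ↥S) → Fin (nS s.1 s.2)) → (ℝ → X) := fun g t =>
      if h : p t ∈ S then cS (p t) h (g ⟨p t, h⟩) else 0 with hW
    -- choose indices for each v
    have hpick : ∀ v ∈ V, ∃ g : (s : ↥S) → Fin (nS s.1 s.2),
        ∀ s : ↥S, ‖v s.1 - cS s.1 s.2 (g s)‖ < σ + ε/8 := by
      intro v hv
      have : ∀ s : ↥S, ∃ i : Fin (nS s.1 s.2), ‖v s.1 - cS s.1 s.2 i‖ < σ + ε/8 :=
        fun s => hcS s.1 s.2 v hv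
      exact ⟨fun s => (this s).choose, fun s => (this s).choose_spec⟩
    -- conclude: σ + ε ∈ USet
    have hmem : σ + ε ∈ USet := by
      refine ⟨by linarith, Set.range W, Set.finite_range W, fun v hv => ?_⟩
      obtain ⟨g, hg⟩ := hpick v hv
      refine ⟨W g, ⟨g, rfl⟩, σ + ε/8 + ε/4, by linarith, fun t ht => ?_⟩
      obtain ⟨hpS, hosc⟩ := hkey t ht
      have hWt : W g t = cS (p t) hpS (g ⟨p t, hpS⟩) := by
        simp only [hW, dif_pos hpS]
      rw [hWt]
      have h1 := hosc v hv
      have h2 := hg ⟨p t, hpS⟩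
      calc ‖v t - cS (p t) hpS (g ⟨p t, hpS⟩)‖
          = ‖(v t - v (p t)) + (v (p t) - cS (p t) hpS (g ⟨p t, hpS⟩))‖ := by
            congr 1; abel
        _ ≤ ‖v t - v (p t)‖ + ‖v (p t) - cS (p t) hpS (g ⟨p t, hpS⟩)‖ := norm_add_le _ _
        _ ≤ σ + ε/8 + ε/4 := by linarith [h2]
    calc Λ = sInf USet := hΛdef
      _ ≤ σ + ε := csInf_le hU_bdd hmem
  exact le_antisymm hD hC
end
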